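/- arXiv:2108.05231 — 8 statements merged into one kernel-verified Lean document; each statement's English description precedes it below -/
import Mathlib

section
/- There exists a partial computable function f : ℕ →. ℕ that has no total computable extension; that is, f is partial computable (Partrec f) and there is no computable function g : ℕ → ℕ such that for every n and y, f n = some y implies g n = y. -/
/-!
Diagonalization: let `f n` be one more than the output of the `n`-th program on input `n`.
A total computable `g` is computed by some program with index `n`, and then `f n = g n + 1`,
so `g` cannot extend `f` at `n`.
-/

open Nat.Partrec

def diagonal (n : ℕ) : Part ℕ :=
  (Code.eval (Denumerable.ofNat Code n) n).map Nat.succ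

theorem partrec_diagonal : Partrec diagonal :=
  Partrec.map (Code.eval_part.comp (Computable.ofNat Code) Computable.id)
    (Computable.succ.comp Computable.snd).to₂

theorem exists_diagonal_eq_succ {g : ℕ → ℕ} (hg : Computable g) :
    ∃ n, diagonal n = Part.some (g n + 1) := by
  obtain ⟨c, hc⟩ := Code.exists_code.1 (Partrec.nat_iff.1 hg.partrec)
  refine ⟨Encodable.encode c, ?_⟩
  rw [diagonal, Denumerable.ofNat_encode, hc]
  rfl

/-- **Shen & Vereshchagin.** There exists a partial computable function `f : ℕ →. ℕ`
that has no total computable extension: there is no computable `g : ℕ → ℕ` with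
`g n = y` whenever `f n = some y`. -/
theorem exists_partrec_nat_without_total_computable_extension :
    ∃ f : ℕ →. ℕ, Partrec f ∧
      ¬ ∃ g : ℕ → ℕ, Computable g ∧ ∀ (n y : ℕ), f n = Part.some y → g n = y := by
  refine ⟨diagonal, partrec_diagonal, ?_⟩
  rintro ⟨g, hg, hext⟩
  obtain ⟨n, hn⟩ := exists_diagonal_eq_succ hg
  exact Nat.succ_ne_self (g n) (hext n _ hn).symm
end

section
/- There exists a partial computable function f : ℕ →. Bool that has no total computable extension; that is, f is partial computable (Partrec f) and there is no computable function g : ℕ → Bool such that for every n and b, f n = some b implies g n = b. -/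
/-!
Diagonalisation: let `diagonalBool n` run the `n`-th program on input `n` and answer `true`
iff the output is `0`. A computable `g` is computed by some program `c`, and then
`diagonalBool (encode c) = !g (encode c)` (since `encode false = 0` and `encode true = 1`),
so `g` cannot extend `diagonalBool`.
-/

open Encodable
open Nat.Partrec (Code)

def diagonalBool : ℕ →. Bool := fun n =>
  ((Denumerable.ofNat Code n).eval n).map fun m => decide (m = 0)

theorem partrec_diagonalBool : Partrec diagonalBool :=
  (Code.eval_part.comp (Computable.ofNat Code) Computable.id).map
    ((Primrec.eq.comp Primrec.snd (Primrec.const 0)).decide.to_comp).to₂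

theorem Computable.exists_code_eval_eq_encode {α : Type*} [Primcodable α] {g : ℕ → α}
    (hg : Computable g) : ∃ c : Code, c.eval = fun n => Part.some (encode (g n)) :=
  Code.exists_code.mp (Partrec.nat_iff.mp (Computable.encode.comp hg).partrec)

theorem diagonalBool_encode_of_eval_eq {g : ℕ → Bool} {c : Code}
    (hc : c.eval = fun n => Part.some (encode (g n))) :
    diagonalBool (encode c) = Part.some (!g (encode c)) := by
  cases h : g (encode c) <;> simp [diagonalBool, hc, h]

/-- There exists a partial computable function `f : ℕ →. Bool` that has no total
computable extension: there is no computable `g : ℕ → Bool` with `g n = b`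
whenever `f n = some b`. -/
theorem exists_partrec_bool_without_total_computable_extension :
    ∃ f : ℕ →. Bool, Partrec f ∧
      ¬ ∃ g : ℕ → Bool, Computable g ∧ ∀ (n : ℕ) (b : Bool), f n = Part.some b → g n = b := by
  refine ⟨diagonalBool, partrec_diagonalBool, ?_⟩
  rintro ⟨g, hg, hext⟩
  obtain ⟨c, hc⟩ := hg.exists_code_eval_eq_encode
  simpa using hext _ _ (diagonalBool_encode_of_eval_eq hc)
end

section
/- For every n, m, i, j with m ≤ i and m ≤ j, one has |C n i - C n j| ≤ 2^{-m} and |D n i - D n j| ≤ 2^{-m}; that is, for each fixed n the sequences k ↦ C n k and k ↦ D n k are Cauchy sequences of rationals with the identity function as modulus (regulator), so each determines a constructive real number. -/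
open Nat.Partrec (Code)
open Nat.Partrec.Code

/-- The rational sequence `C`: if `f` (computed by code `e`) halts on input `n` by step `k`,
with least halting step `m`, then `C n k = 1 - 2⁻ᵐ` if the output was `false`,
and `1` otherwise (in particular, if the output was `true`); if it has not halted
within `k` steps, then `C n k = 1`. -/
def Cq (e : Code) (n k : ℕ) : ℚ :=
  if h : ∃ m, m ≤ k ∧ (evaln m e n).isSome then
    if evaln (Nat.find h) e n = some (Encodable.encode false) then
      1 - (2 : ℚ)⁻¹ ^ (Nat.find h)
    else 1
  else 1

/-- The rational sequence `D`: symmetric to `C`, with the roles of the outputs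
`true` and `false` swapped. -/
def Dq (e : Code) (n k : ℕ) : ℚ :=
  if h : ∃ m, m ≤ k ∧ (evaln m e n).isSome then
    if evaln (Nat.find h) e n = some (Encodable.encode true) then
      1 - (2 : ℚ)⁻¹ ^ (Nat.find h)
    else 1
  else 1

/-- `C∞ n`, the real limit of the sequence `k ↦ C n k`. -/
noncomputable def Cinf (e : Code) (n : ℕ) : ℝ :=
  Filter.limUnder Filter.atTop fun k => ((Cq e n k : ℝ))

/-- `D∞ n`, the real limit of the sequence `k ↦ D n k`. -/
noncomputable def Dinf (e : Code) (n : ℕ) : ℝ :=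
  Filter.limUnder Filter.atTop fun k => ((Dq e n k : ℝ))

/-! The sequence `k ↦ C n k` is `1` until the least halting stage `t` and constant from then on, and
the jump at `t` has size at most `2⁻ᵗ`. Two indices `i, j ≥ m` on different sides of the jump force
`m < t`, so `|C n i - C n j| ≤ 2⁻ᵗ ≤ 2⁻ᵐ`; likewise for `D`. -/

theorem abs_ite_sub_ite_le_inv_two_pow {a : ℚ} {t m i j : ℕ} (ha : |a - 1| ≤ 2⁻¹ ^ t)
    (hi : m ≤ i) (hj : m ≤ j) :
    |(if t ≤ i then a else 1) - (if t ≤ j then a else 1)| ≤ (2 : ℚ)⁻¹ ^ m := by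
  have jump_le {k : ℕ} (hmk : m ≤ k) (hkt : ¬t ≤ k) : |a - 1| ≤ (2 : ℚ)⁻¹ ^ m :=
    ha.trans (pow_le_pow_of_le_one (by norm_num) (by norm_num) (hmk.trans (not_le.1 hkt).le))
  split_ifs with hti htj htj
  · simp
  · exact jump_le hj htj
  · rw [abs_sub_comm]
    exact jump_le hi hti
  · simp

section FirstStage

variable {p : ℕ → Prop} [DecidablePred p]

theorem Nat.find_exists_le_and_eq_find (h₀ : ∃ m, p m) {k : ℕ} (h : ∃ m, m ≤ k ∧ p m) :
    Nat.find h = Nat.find h₀ :=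
  le_antisymm
    (Nat.find_min' h ⟨(Nat.find_min' h₀ (Nat.find_spec h).2).trans (Nat.find_spec h).1,
      Nat.find_spec h₀⟩)
    (Nat.find_min' h₀ (Nat.find_spec h).2)

theorem Nat.dite_exists_le_and_eq_ite_find_le {α : Type*} (g : ℕ → α) (a : α) (h₀ : ∃ m, p m)
    (k : ℕ) :
    (if h : ∃ m, m ≤ k ∧ p m then g (Nat.find h) else a) =
      if Nat.find h₀ ≤ k then g (Nat.find h₀) else a := by
  by_cases hk : Nat.find h₀ ≤ k
  · have h : ∃ m, m ≤ k ∧ p m := ⟨_, hk, Nat.find_spec h₀⟩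
    rw [dif_pos h, if_pos hk, Nat.find_exists_le_and_eq_find h₀ h]
  · refine (dif_neg ?_).trans (if_neg hk).symm
    rintro ⟨m, hmk, hm⟩
    exact hk ((Nat.find_min' h₀ hm).trans hmk)

theorem abs_dite_exists_le_sub_dite_exists_le_le (g : ℕ → ℚ)
    (hg : ∀ t, |g t - 1| ≤ 2⁻¹ ^ t) {m i j : ℕ} (hi : m ≤ i) (hj : m ≤ j) :
    |(if h : ∃ m, m ≤ i ∧ p m then g (Nat.find h) else 1) -
        (if h : ∃ m, m ≤ j ∧ p m then g (Nat.find h) else 1)| ≤ (2 : ℚ)⁻¹ ^ m := by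
  by_cases h₀ : ∃ m, p m
  · simp only [Nat.dite_exists_le_and_eq_ite_find_le g 1 h₀]
    exact abs_ite_sub_ite_le_inv_two_pow (hg _) hi hj
  · have never (k : ℕ) : ¬∃ m, m ≤ k ∧ p m := fun ⟨m, _, hm⟩ => h₀ ⟨m, hm⟩
    rw [dif_neg (never i), dif_neg (never j), sub_self, abs_zero]
    positivity

end FirstStage

theorem abs_ite_one_sub_inv_two_pow_sub_one_le (c : Prop) [Decidable c] (t : ℕ) :
    |(if c then 1 - (2 : ℚ)⁻¹ ^ t else 1) - 1| ≤ 2⁻¹ ^ t := by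
  split_ifs <;> simp

theorem cq_dq_cauchy_with_identity_modulus_general (e : Code) :
    ∀ (n m i j : ℕ), m ≤ i → m ≤ j →
      |Cq e n i - Cq e n j| ≤ (2 : ℚ)⁻¹ ^ m ∧ |Dq e n i - Dq e n j| ≤ (2 : ℚ)⁻¹ ^ m := by
  intro n m i j hi hj
  have jump_le (b : Bool) (t : ℕ) :
      |(if evaln t e n = some (Encodable.encode b) then 1 - (2 : ℚ)⁻¹ ^ t else 1) - 1| ≤ 2⁻¹ ^ t :=
    abs_ite_one_sub_inv_two_pow_sub_one_le _ t
  exact ⟨abs_dite_exists_le_sub_dite_exists_le_le _ (jump_le false) hi hj,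
    abs_dite_exists_le_sub_dite_exists_le_le _ (jump_le true) hi hj⟩

/-- For each fixed `n`, the sequences `k ↦ C n k` and `k ↦ D n k` are Cauchy sequences
of rationals with the identity function as modulus (regulator): for `m ≤ i` and `m ≤ j`,
`|C n i - C n j| ≤ 2⁻ᵐ` and `|D n i - D n j| ≤ 2⁻ᵐ`. Hence each determines a
constructive real number. -/
theorem cq_dq_cauchy_with_identity_modulus (f : ℕ →. Bool) (hf : Partrec f) (e : Code)
    (he : ∀ (n : ℕ) (b : Bool), b ∈ f n ↔ ∃ k, evaln k e n = some (Encodable.encode b)) :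
    ∀ (n m i j : ℕ), m ≤ i → m ≤ j →
      |Cq e n i - Cq e n j| ≤ (2 : ℚ)⁻¹ ^ m ∧ |Dq e n i - Dq e n j| ≤ (2 : ℚ)⁻¹ ^ m :=
  cq_dq_cauchy_with_identity_modulus_general e
end

section
/- For every n: if f n = some false then C∞ n < D∞ n; if f n = some true then D∞ n < C∞ n; and if n is not in the domain of f then C∞ n = D∞ n. -/
open Nat.Partrec (Code)
open Nat.Partrec.Code

/-!
If the computation of `e` on `n` first halts at step `m` with output `b`, then from `k = m` on
the sequence attached to `b` is constantly `1 - 2⁻ᵐ < 1` and the other one is constantly `1`.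
If it never halts with a Boolean output, both sequences are constantly `1`.
-/

open Filter

lemma Nat.Partrec.Code.evaln_eq_of_isSome {c : Code} {m k n v : ℕ} (hm : (evaln m c n).isSome)
    (hk : evaln k c n = some v) : evaln m c n = some v := by
  obtain ⟨w, hw⟩ := Option.isSome_iff_exists.mp hm
  rw [hw, Part.mem_unique (evaln_sound hw) (evaln_sound hk)]

/-- `Cq e` is `haltWeight e false` and `Dq e` is `haltWeight e true`. -/
def haltWeight (e : Code) (b : Bool) (n k : ℕ) : ℚ :=
  if h : ∃ m, m ≤ k ∧ (evaln m e n).isSome then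
    if evaln (Nat.find h) e n = some (Encodable.encode b) then
      1 - (2 : ℚ)⁻¹ ^ (Nat.find h)
    else 1
  else 1

noncomputable def haltLimit (e : Code) (b : Bool) (n : ℕ) : ℝ :=
  limUnder atTop fun k => (haltWeight e b n k : ℝ)

lemma Cinf_eq_haltLimit (e : Code) : Cinf e = haltLimit e false := rfl

lemma Dinf_eq_haltLimit (e : Code) : Dinf e = haltLimit e true := rfl

section

variable (e : Code) (n : ℕ) (b : Bool)

lemma haltWeight_of_find_le (hhalt : ∃ m, (evaln m e n).isSome) {k : ℕ}
    (hk : Nat.find hhalt ≤ k) :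
    haltWeight e b n k = if evaln (Nat.find hhalt) e n = some (Encodable.encode b) then
      1 - (2 : ℚ)⁻¹ ^ (Nat.find hhalt) else 1 := by
  have h : ∃ m, m ≤ k ∧ (evaln m e n).isSome := ⟨_, hk, Nat.find_spec hhalt⟩
  have hfind : Nat.find h = Nat.find hhalt :=
    le_antisymm (Nat.find_le ⟨hk, Nat.find_spec hhalt⟩) (Nat.find_le (Nat.find_spec h).2)
  rw [haltWeight, dif_pos h, hfind]

lemma haltLimit_of_halts (hhalt : ∃ m, (evaln m e n).isSome) :
    haltLimit e b n = ((if evaln (Nat.find hhalt) e n = some (Encodable.encode b) then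
      1 - (2 : ℚ)⁻¹ ^ (Nat.find hhalt) else 1 : ℚ) : ℝ) := by
  refine Tendsto.limUnder_eq (tendsto_const_nhds.congr' ?_)
  filter_upwards [eventually_ge_atTop (Nat.find hhalt)] with k hk
  rw [haltWeight_of_find_le e n b hhalt hk]

lemma exists_haltLimit_of_evaln_eq {k₀ : ℕ} (h : evaln k₀ e n = some (Encodable.encode b)) :
    ∃ m : ℕ, haltLimit e b n = 1 - (2 : ℝ)⁻¹ ^ m ∧ haltLimit e (!b) n = 1 := by
  have hhalt : ∃ m, (evaln m e n).isSome := ⟨k₀, by simp [h]⟩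
  have hfind := evaln_eq_of_isSome (Nat.find_spec hhalt) h
  refine ⟨Nat.find hhalt, ?_, ?_⟩
  · rw [haltLimit_of_halts e n b hhalt, if_pos hfind]
    norm_num
  · rw [haltLimit_of_halts e n (!b) hhalt, if_neg (by rw [hfind]; simp)]
    norm_num

lemma haltLimit_eq_one (h : ∀ k, evaln k e n ≠ some (Encodable.encode b)) :
    haltLimit e b n = 1 := by
  have hone : (fun k => (haltWeight e b n k : ℝ)) = fun _ => 1 := by
    funext k
    rw [haltWeight]
    split_ifs with _ hout
    · exact absurd hout (h _)
    all_goals norm_num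
  rw [haltLimit, hone]
  exact tendsto_const_nhds.limUnder_eq

end

theorem cinf_dinf_comparison_general (f : ℕ →. Bool) (e : Code)
    (he : ∀ (n : ℕ) (b : Bool), b ∈ f n ↔ ∃ k, evaln k e n = some (Encodable.encode b)) :
    ∀ n : ℕ,
      (f n = Part.some false → Cinf e n < Dinf e n) ∧
      (f n = Part.some true → Dinf e n < Cinf e n) ∧
      (¬ (f n).Dom → Cinf e n = Dinf e n) := by
  intro n
  have halts (b : Bool) (hb : f n = Part.some b) : haltLimit e b n < haltLimit e (!b) n := by
    obtain ⟨k₀, hk₀⟩ := (he n b).1 (hb ▸ Part.mem_some b)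
    obtain ⟨m, hb_lim, hnb_lim⟩ := exists_haltLimit_of_evaln_eq e n b hk₀
    rw [hb_lim, hnb_lim]
    exact sub_lt_self 1 (by positivity)
  refine ⟨halts false, halts true, fun hdom => ?_⟩
  have never (b : Bool) (k : ℕ) : evaln k e n ≠ some (Encodable.encode b) :=
    fun h => hdom (Part.dom_iff_mem.2 ⟨b, (he n b).2 ⟨k, h⟩⟩)
  rw [Cinf_eq_haltLimit, Dinf_eq_haltLimit, haltLimit_eq_one e n false (never false),
    haltLimit_eq_one e n true (never true)]

/-- For every `n`: if `f n = some false` then `C∞ n < D∞ n`; if `f n = some true`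
then `D∞ n < C∞ n`; and if `n` is not in the domain of `f` then `C∞ n = D∞ n`. -/
theorem cinf_dinf_comparison (f : ℕ →. Bool) (hf : Partrec f) (e : Code)
    (he : ∀ (n : ℕ) (b : Bool), b ∈ f n ↔ ∃ k, evaln k e n = some (Encodable.encode b)) :
    ∀ n : ℕ,
      (f n = Part.some false → Cinf e n < Dinf e n) ∧
      (f n = Part.some true → Dinf e n < Cinf e n) ∧
      (¬ (f n).Dom → Cinf e n = Dinf e n) :=
  cinf_dinf_comparison_general f e he
end

section
/- Suppose f has no total computable extension. Then there is no computable function g : ℕ → Bool such that for all n, (g n = false → C∞ n ≤ D∞ n) and (g n = true → D∞ n ≤ C∞ n); that is, no algorithm can uniformly select the smaller of the two constructive reals C∞ n and D∞ n. -/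
/-!
If `f` halts on `n` with output `b`, first at step `m`, then the sequence attached to `b`
stabilises at `1 - 2⁻ᵐ` and the other one at `1`, so `C∞ n` and `D∞ n` differ and a
selector is forced to answer `g n = b`. A computable selector would therefore be a total
computable extension of `f`.
-/

open Nat.Partrec (Code)
open Nat.Partrec.Code

theorem Nat.find_eq_find_of_find_le {p : ℕ → Prop} [DecidablePred p] (h : ∃ m, p m) {k : ℕ}
    (hk : Nat.find h ≤ k) (h' : ∃ m, m ≤ k ∧ p m) : Nat.find h' = Nat.find h :=
  le_antisymm (Nat.find_le ⟨hk, Nat.find_spec h⟩) (Nat.find_le (Nat.find_spec h').2)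

namespace Nat.Partrec.Code

theorem evaln_find_eq_some {e : Code} {n v : ℕ} (h : ∃ m, (evaln m e n).isSome)
    (hv : v ∈ eval e n) : evaln (Nat.find h) e n = some v := by
  obtain ⟨w, hw⟩ := Option.isSome_iff_exists.1 (Nat.find_spec h)
  rw [hw, Part.mem_unique hv (evaln_sound hw)]

end Nat.Partrec.Code

section

variable {e : Code} {n : ℕ}

theorem Cinf_eq_of_halts (h : ∃ m, (evaln m e n).isSome) :
    Cinf e n = if evaln (Nat.find h) e n = some (Encodable.encode false) then
      1 - (2 : ℝ)⁻¹ ^ Nat.find h else 1 := by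
  refine (tendsto_atTop_of_eventually_const (i₀ := Nat.find h) fun k hk => ?_).limUnder_eq
  have h' : ∃ m, m ≤ k ∧ (evaln m e n).isSome := ⟨Nat.find h, hk, Nat.find_spec h⟩
  rw [Cq, dif_pos h', Nat.find_eq_find_of_find_le h hk h']
  split_ifs <;> push_cast <;> rfl

theorem Dinf_eq_of_halts (h : ∃ m, (evaln m e n).isSome) :
    Dinf e n = if evaln (Nat.find h) e n = some (Encodable.encode true) then
      1 - (2 : ℝ)⁻¹ ^ Nat.find h else 1 := by
  refine (tendsto_atTop_of_eventually_const (i₀ := Nat.find h) fun k hk => ?_).limUnder_eq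
  have h' : ∃ m, m ≤ k ∧ (evaln m e n).isSome := ⟨Nat.find h, hk, Nat.find_spec h⟩
  rw [Dq, dif_pos h', Nat.find_eq_find_of_find_le h hk h']
  split_ifs <;> push_cast <;> rfl

theorem Cinf_lt_Dinf_of_evaln_eq_false {k : ℕ}
    (hk : evaln k e n = some (Encodable.encode false)) : Cinf e n < Dinf e n := by
  have h : ∃ m, (evaln m e n).isSome := ⟨k, by simp [hk]⟩
  have hfind := evaln_find_eq_some h (evaln_sound hk)
  rw [Cinf_eq_of_halts h, Dinf_eq_of_halts h, hfind]
  simp [pow_pos]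

theorem Dinf_lt_Cinf_of_evaln_eq_true {k : ℕ}
    (hk : evaln k e n = some (Encodable.encode true)) : Dinf e n < Cinf e n := by
  have h : ∃ m, (evaln m e n).isSome := ⟨k, by simp [hk]⟩
  have hfind := evaln_find_eq_some h (evaln_sound hk)
  rw [Cinf_eq_of_halts h, Dinf_eq_of_halts h, hfind]
  simp [pow_pos]

end

theorem no_computable_selector_general (f : ℕ →. Bool) (e : Code)
    (he : ∀ (n : ℕ) (b : Bool), b ∈ f n ↔ ∃ k, evaln k e n = some (Encodable.encode b))
    (hext : ¬ ∃ g : ℕ → Bool, Computable g ∧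
      ∀ (n : ℕ) (b : Bool), f n = Part.some b → g n = b) :
    ¬ ∃ g : ℕ → Bool, Computable g ∧
      ∀ n : ℕ, (g n = false → Cinf e n ≤ Dinf e n) ∧ (g n = true → Dinf e n ≤ Cinf e n) := by
  rintro ⟨g, hg, hsel⟩
  refine hext ⟨g, hg, fun n b hb => ?_⟩
  obtain ⟨k, hk⟩ := (he n b).1 (hb ▸ Part.mem_some b)
  cases b <;> cases hgn : g n
  · rfl
  · exact absurd ((hsel n).2 hgn) (Cinf_lt_Dinf_of_evaln_eq_false hk).not_ge
  · exact absurd ((hsel n).1 hgn) (Dinf_lt_Cinf_of_evaln_eq_true hk).not_ge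
  · rfl

/-- If `f` has no total computable extension, then no computable `g : ℕ → Bool` can
uniformly select the smaller of the two constructive reals `C∞ n` and `D∞ n`:
there is no computable `g` with `g n = false → C∞ n ≤ D∞ n` and
`g n = true → D∞ n ≤ C∞ n` for all `n`. -/
theorem no_computable_selector (f : ℕ →. Bool) (hf : Partrec f) (e : Code)
    (he : ∀ (n : ℕ) (b : Bool), b ∈ f n ↔ ∃ k, evaln k e n = some (Encodable.encode b))
    (hext : ¬ ∃ g : ℕ → Bool, Computable g ∧
      ∀ (n : ℕ) (b : Bool), f n = Part.some b → g n = b) :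
    ¬ ∃ g : ℕ → Bool, Computable g ∧
      ∀ n : ℕ, (g n = false → Cinf e n ≤ Dinf e n) ∧ (g n = true → Dinf e n ≤ Cinf e n) :=
  no_computable_selector_general f e he hext
end

section
/- There exist a partial computable function f : ℕ →. Bool and a computable family of pairs of rational Cauchy sequences (k ↦ C n k, k ↦ D n k), each Cauchy with the identity modulus (|C n i - C n j| ≤ 2^{-m} and |D n i - D n j| ≤ 2^{-m} whenever m ≤ i and m ≤ j), with real limits C∞ n and D∞ n, such that no computable function g : ℕ → Bool satisfies, for all n, (g n = false → C∞ n ≤ D∞ n) and (g n = true → D∞ n ≤ C∞ n). -/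
/-!
Let `C n k` be `0` as long as the `n`-th program, run on input `n` for `k` steps, has not halted,
and `± 2⁻ᵀ` from then on, where `T` is its halting time and the sign is `+` iff the output is `0`;
take `D n k = 0`. Jumping only by `2⁻ᵀ` at time `T` keeps `C n` Cauchy with the identity modulus,
and the limit of `C n` is positive or negative exactly when the program halts with output `0` or
with a nonzero output. Given a computable selector `g`, let `N` be a program computing
`n ↦ (g n).toNat`: on input `N` it halts with output `(g N).toNat`, so the sign of `C∞ N`
contradicts `g N`.
-/

open Encodable Primrec Filter Topology
open Nat.Partrec (Code)

section Computability

variable {α : Type*} [Primcodable α]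

theorem Primrec.nat_count {p : α → ℕ → Prop} [∀ a, DecidablePred (p a)] (hp : PrimrecRel p) :
    Primrec₂ fun a n => Nat.count (p a) n := by
  have hfilter : Primrec₂ fun a n => (List.range n).filter (p a ·) :=
    (PrimrecRel.listFilter hp.swap).comp (list_range.comp snd) fst
  exact (list_length.comp hfilter).to₂.of_eq fun a n => by
    simp [Nat.count, List.countP_eq_length_filter]

theorem Primrec.nat_pow : Primrec₂ ((· ^ ·) : ℕ → ℕ → ℕ) :=
  Primrec₂.unpaired'.mp Nat.Primrec.pow

theorem Nat.coprime_iff_forall_lt {a b : ℕ} :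
    Nat.Coprime a b ↔ ∀ k < a + b + 1, k ∣ a → k ∣ b → k = 1 := by
  refine ⟨fun h k _ hka hkb => Nat.eq_one_of_dvd_coprimes h hka hkb, fun h => ?_⟩
  have hle : Nat.gcd a b ≤ a + b := by
    rcases Nat.eq_zero_or_pos (a + b) with hab | hab
    · simp_all
    · exact Nat.le_of_dvd hab (dvd_add (Nat.gcd_dvd_left a b) (Nat.gcd_dvd_right a b))
  exact h _ (by omega) (Nat.gcd_dvd_left a b) (Nat.gcd_dvd_right a b)

theorem Primrec.nat_coprime : PrimrecRel Nat.Coprime := by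
  have hdvd : PrimrecRel fun k n : ℕ => k ∣ n :=
    (Primrec.eq.comp (nat_mod.comp snd fst) (const 0)).of_eq fun _ =>
      Nat.dvd_iff_mod_eq_zero.symm
  have hR : PrimrecRel fun (k : ℕ) (p : ℕ × ℕ) => k ∣ p.1 → k ∣ p.2 → k = 1 :=
    ((hdvd.comp fst (fst.comp snd)).not.or ((hdvd.comp fst (snd.comp snd)).not.or
      (Primrec.eq.comp fst (const 1)))).of_eq fun _ => by tauto
  have h : PrimrecPred fun p : ℕ × ℕ => ∀ k ∈ List.range (p.1 + p.2 + 1),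
      k ∣ p.1 → k ∣ p.2 → k = 1 :=
    (PrimrecRel.forall_mem_list hR).comp (list_range.comp (succ.comp (nat_add.comp fst snd)))
      Primrec.id
  exact h.of_eq fun _ => by simp only [List.mem_range, Nat.coprime_iff_forall_lt]

theorem Int.natAbs_eq_encode (z : ℤ) : z.natAbs = (encode z + 1) / 2 := by
  cases z with
  | ofNat n => show n = (Nat.bit false n + 1) / 2; simp [Nat.bit]; omega
  | negSucc n => show n + 1 = (Nat.bit true n + 1) / 2; simp [Nat.bit]; omega

theorem Primrec.int_natAbs : Primrec Int.natAbs :=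
  (nat_div.comp (succ.comp Primrec.encode) (const 2)).of_eq fun z => (Int.natAbs_eq_encode z).symm

/- `encode` is the `Encodable ℚ` instance, which pairs numerator and denominator. The
`Primcodable ℚ` instance comes instead from `Denumerable ℚ`, whose code of `q` counts the codes
below `encode q`. -/
theorem Rat.encode_eq (q : ℚ) : encode q = Nat.pair (encode q.num) q.den := rfl

theorem Rat.mem_range_encode_iff (n : ℕ) : n ∈ Set.range (encode : ℚ → ℕ) ↔
    0 < n.unpair.2 ∧ (Denumerable.ofNat ℤ n.unpair.1).natAbs.Coprime n.unpair.2 := by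
  constructor
  · rintro ⟨q, rfl⟩
    rw [Rat.encode_eq, Nat.unpair_pair]
    exact ⟨q.pos, by simpa only [Denumerable.ofNat_encode] using q.reduced⟩
  · rintro ⟨hpos, hcop⟩
    refine ⟨⟨Denumerable.ofNat ℤ n.unpair.1, n.unpair.2, hpos.ne', hcop⟩, ?_⟩
    rw [Rat.encode_eq]
    simp only [Denumerable.encode_ofNat, Nat.pair_unpair]

theorem Rat.primrecPred_mem_range_encode : PrimrecPred (· ∈ Set.range (encode : ℚ → ℕ)) :=
  ((nat_lt.comp (const 0) (snd.comp unpair)).and (nat_coprime.comp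
    (int_natAbs.comp ((Primrec.ofNat ℤ).comp (fst.comp unpair))) (snd.comp unpair))).of_eq
    fun n => (Rat.mem_range_encode_iff n).symm

theorem Rat.primrec_of_num_den {f : α → ℚ} (hnum : Primrec fun a => (f a).num)
    (hden : Primrec fun a => (f a).den) : Primrec f := by
  classical
  have hcode : Primrec fun a => encode (f a) :=
    Primrec₂.natPair.comp (Primrec.encode.comp hnum) hden
  refine Primrec.encode_iff.mp ?_
  have hcount := (Primrec.nat_count (p := fun (_ : α) n => n ∈ Set.range (encode : ℚ → ℕ))
    (Rat.primrecPred_mem_range_encode.comp snd)).comp Primrec.id hcode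
  exact hcount.of_eq fun a => by
    show _ = @Nat.count (· ∈ Set.range (encode : ℚ → ℕ)) (decidableRangeEncode ℚ) _
    congr

end Computability

theorem Rat.num_div_two_pow {ε : ℤ} (hε : ε.natAbs = 1) (c : ℕ) : ((ε : ℚ) / 2 ^ c).num = ε := by
  have := Rat.num_div_eq_of_coprime (a := ε) (b := 2 ^ c) (by positivity) (by simp [hε])
  exact_mod_cast this

theorem Rat.den_div_two_pow {ε : ℤ} (hε : ε.natAbs = 1) (c : ℕ) :
    ((ε : ℚ) / 2 ^ c).den = 2 ^ c := by
  have := Rat.den_div_eq_of_coprime (a := ε) (b := 2 ^ c) (by positivity) (by simp [hε])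
  exact_mod_cast this

def outputSign (v : ℕ) : ℤ := if v = 0 then 1 else -1

theorem natAbs_outputSign (v : ℕ) : (outputSign v).natAbs = 1 := by
  unfold outputSign; split_ifs <;> rfl

def SomeStable (o : ℕ → Option ℕ) : Prop :=
  ∀ ⦃k k' v⦄, k ≤ k' → o k = some v → o k' = some v

/- For `SomeStable o`, the number of stages `t < k` with `o t = none` is, once `o k` is defined,
the first stage at which `o` returned a value. -/
def signal (o : ℕ → Option ℕ) (k : ℕ) : ℚ :=
  (o k).elim 0 fun v => (outputSign v : ℚ) / 2 ^ Nat.count (fun t => o t = none) k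

section Signal

variable {o : ℕ → Option ℕ} {T k v : ℕ}

theorem num_signal : (signal o k).num = (o k).elim 0 outputSign := by
  cases h : o k with
  | none => simp [signal, h]
  | some v => simpa [signal, h] using Rat.num_div_two_pow (natAbs_outputSign v) _

theorem den_signal :
    (signal o k).den = (o k).elim 1 fun _ => 2 ^ Nat.count (fun t => o t = none) k := by
  cases h : o k with
  | none => simp [signal, h]
  | some v => simpa [signal, h] using Rat.den_div_two_pow (natAbs_outputSign v) _

theorem primrec_signal {α : Type*} [Primcodable α] {o : α → ℕ → Option ℕ} (ho : Primrec₂ o) :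
    Primrec₂ fun a k => signal (o a) k := by
  have hcount : Primrec₂ fun a k => Nat.count (fun t => o a t = none) k :=
    Primrec.nat_count (Primrec.eq.comp ho (const none))
  have hsign : Primrec₂ fun (_ : α × ℕ) (v : ℕ) => outputSign v :=
    (Primrec.ite (Primrec.eq.comp snd (const 0)) (const 1) (const (-1))).to₂
  have hpow : Primrec₂ fun (p : α × ℕ) (_ : ℕ) => 2 ^ Nat.count (fun t => o p.1 t = none) p.2 :=
    (Primrec.nat_pow.comp (const 2) hcount).comp fst |>.to₂
  refine Rat.primrec_of_num_den ?_ ?_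
  · refine (option_casesOn ho (const 0) hsign).of_eq fun p => ?_
    rw [num_signal]
    cases o p.1 p.2 <;> rfl
  · refine (option_casesOn ho (const 1) hpow).of_eq fun p => ?_
    rw [den_signal]
    cases o p.1 p.2 <;> rfl

theorem signal_eq_step (ho : SomeStable o) (hT : o T = some v) (hfirst : ∀ t < T, o t = none)
    (k : ℕ) : signal o k = if T ≤ k then (outputSign v : ℚ) / 2 ^ T else 0 := by
  by_cases hk : T ≤ k
  · obtain ⟨d, rfl⟩ := Nat.exists_eq_add_of_le hk
    have hcount : Nat.count (fun t => o t = none) (T + d) = T := by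
      rw [Nat.count_add, Nat.count_of_forall hfirst,
        Nat.count_of_forall_not fun j _ => by simp [ho (Nat.le_add_right T j) hT], add_zero]
    simp only [signal, ho (Nat.le_add_right T d) hT, hcount, if_pos hk, Option.elim_some]
  · simp [signal, hfirst k (not_le.mp hk), hk]

theorem exists_signal_eq_step (ho : SomeStable o) (hk : o k = some v) :
    ∃ T, signal o = fun j => if T ≤ j then (outputSign v : ℚ) / 2 ^ T else 0 := by
  classical
  have hex : ∃ t, (o t).isSome := ⟨k, by simp [hk]⟩
  obtain ⟨w, hw⟩ := Option.isSome_iff_exists.mp (Nat.find_spec hex)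
  have hwv : w = v := by
    have h := ho (le_max_left _ k) hw
    rwa [ho (le_max_right (Nat.find hex) k) hk, Option.some_inj, eq_comm] at h
  subst hwv
  refine ⟨Nat.find hex, funext (signal_eq_step ho hw fun t ht => ?_)⟩
  simpa using Nat.find_min hex ht

theorem abs_step_sub_le {x : ℚ} (hx : |x| ≤ 2⁻¹ ^ T) {m i j : ℕ} (hi : m ≤ i) (hj : m ≤ j) :
    |(if T ≤ i then x else 0) - (if T ≤ j then x else 0)| ≤ 2⁻¹ ^ m := by
  have hxm : ∀ l, m ≤ l → l < T → |x| ≤ 2⁻¹ ^ m := fun l hl hlT =>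
    hx.trans (pow_le_pow_of_le_one (by norm_num) (by norm_num) (by omega))
  split_ifs with hTi hTj hTj
  · simp
  · simpa using hxm j hj (by omega)
  · simpa [abs_neg] using hxm i hi (by omega)
  · simp

theorem abs_signal_sub_le (ho : SomeStable o) {m i j : ℕ} (hi : m ≤ i) (hj : m ≤ j) :
    |signal o i - signal o j| ≤ 2⁻¹ ^ m := by
  by_cases h : ∃ k v, o k = some v
  · obtain ⟨k, v, hk⟩ := h
    obtain ⟨T, hT⟩ := exists_signal_eq_step ho hk
    rw [hT]
    refine abs_step_sub_le ?_ hi hj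
    rw [abs_div, inv_pow, abs_pow, ← Int.cast_abs, Int.abs_eq_natAbs, natAbs_outputSign]
    simp
  · push Not at h
    have hzero : ∀ l, signal o l = 0 := fun l => by
      cases hl : o l with
      | none => simp [signal, hl]
      | some w => exact absurd hl (h l w)
    simp [hzero]

theorem tendsto_signal_of_eq_some (ho : SomeStable o) (hk : o k = some v) :
    ∃ T, Tendsto (fun j => (signal o j : ℝ)) atTop (𝓝 ((outputSign v : ℝ) / 2 ^ T)) := by
  obtain ⟨T, hT⟩ := exists_signal_eq_step ho hk
  refine ⟨T, tendsto_const_nhds.congr' ?_⟩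
  filter_upwards [eventually_ge_atTop T] with j hj
  simp only [hT, if_pos hj]
  push_cast
  rfl

end Signal

theorem cauchySeq_of_abs_sub_le_inv_two_pow {a : ℕ → ℚ}
    (h : ∀ m i j, m ≤ i → m ≤ j → |a i - a j| ≤ 2⁻¹ ^ m) : CauchySeq fun k => (a k : ℝ) :=
  cauchySeq_of_le_geometric_two (C := 2) fun n =>
    calc dist (a n : ℝ) (a (n + 1)) = ((|a n - a (n + 1)| : ℚ) : ℝ) := by
          rw [Real.dist_eq]; push_cast; rfl
      _ ≤ ((2⁻¹ ^ n : ℚ) : ℝ) := Rat.cast_le.mpr (h n n (n + 1) le_rfl n.le_succ)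
      _ = 2 / 2 / 2 ^ n := by push_cast; rw [div_self two_ne_zero, one_div, inv_pow]

theorem exists_evaln_self_eq {F : ℕ → ℕ} (hF : Computable F) :
    ∃ n k, Code.evaln k (Denumerable.ofNat Code n) n = some (F n) := by
  obtain ⟨c, hc⟩ := Code.exists_code.mp (Partrec.nat_iff.mp hF.partrec)
  refine ⟨encode c, ?_⟩
  rw [Denumerable.ofNat_encode]
  exact Code.evaln_complete.mp (by rw [hc]; exact Part.mem_some _)

/-- There exist a partial computable function `f : ℕ →. Bool` and a computable family
of pairs of rational sequences `(k ↦ C n k, k ↦ D n k)`, each Cauchy with the identity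
modulus, with real limits `C∞ n` and `D∞ n`, such that no computable `g : ℕ → Bool`
satisfies, for all `n`, `g n = false → C∞ n ≤ D∞ n` and `g n = true → D∞ n ≤ C∞ n`. -/
theorem exists_computable_cauchy_family_without_computable_selector :
    ∃ (f : ℕ →. Bool) (C D : ℕ → ℕ → ℚ) (Cinf Dinf : ℕ → ℝ),
      Partrec f ∧
      Computable (fun p : ℕ × ℕ => C p.1 p.2) ∧
      Computable (fun p : ℕ × ℕ => D p.1 p.2) ∧
      (∀ (n m i j : ℕ), m ≤ i → m ≤ j →
        |C n i - C n j| ≤ (2 : ℚ)⁻¹ ^ m ∧ |D n i - D n j| ≤ (2 : ℚ)⁻¹ ^ m) ∧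
      (∀ n : ℕ, Filter.Tendsto (fun k => ((C n k : ℝ))) Filter.atTop (nhds (Cinf n))) ∧
      (∀ n : ℕ, Filter.Tendsto (fun k => ((D n k : ℝ))) Filter.atTop (nhds (Dinf n))) ∧
      ¬ ∃ g : ℕ → Bool, Computable g ∧
        ∀ n : ℕ, (g n = false → Cinf n ≤ Dinf n) ∧ (g n = true → Dinf n ≤ Cinf n) := by
  set o : ℕ → ℕ → Option ℕ := fun n k => Code.evaln k (Denumerable.ofNat Code n) n
  have ho : ∀ n, SomeStable (o n) := fun _ _ _ _ hk => Code.evaln_mono hk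
  have ho_primrec : Primrec₂ o :=
    Code.primrec_evaln.comp ((snd.pair ((Primrec.ofNat Code).comp fst)).pair fst)
  have hcauchy : ∀ n m i j, m ≤ i → m ≤ j → |signal (o n) i - signal (o n) j| ≤ 2⁻¹ ^ m :=
    fun n _ _ _ hi hj => abs_signal_sub_le (ho n) hi hj
  have hlim : ∀ n, Tendsto (fun k => (signal (o n) k : ℝ)) atTop
      (𝓝 (limUnder atTop fun k => (signal (o n) k : ℝ))) :=
    fun n => (cauchySeq_of_abs_sub_le_inv_two_pow (hcauchy n)).tendsto_limUnder
  refine ⟨fun _ => Part.none, fun n k => signal (o n) k, fun _ _ => 0,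
    fun n => limUnder atTop fun k => (signal (o n) k : ℝ), fun _ => 0, Partrec.none,
    (primrec_signal ho_primrec).to_comp, Computable.const 0,
    fun n m i j hi hj => ⟨hcauchy n m i j hi hj, by simp⟩, hlim,
    fun _ => by simp, ?_⟩
  rintro ⟨g, hg, hsel⟩
  obtain ⟨N, k, hk⟩ := exists_evaln_self_eq ((Primrec.dom_finite Bool.toNat).to_comp.comp hg)
  obtain ⟨T, hT⟩ := tendsto_signal_of_eq_some (ho N) hk
  have hN := tendsto_nhds_unique (hlim N) hT
  have hpos : (0 : ℝ) < 2 ^ T := by positivity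
  cases hgN : g N
  · have hle := (hsel N).1 hgN
    simp [hN, hgN, outputSign] at hle
    linarith
  · have hle := (hsel N).2 hgN
    simp [hN, hgN, outputSign, neg_div] at hle
    linarith
end

section
/- Suppose f has no total computable extension. For each n, equip the complete directed graph on three vertices v1, v2, v3 with weights w_n(v1,v2) = C∞ n, w_n(v2,v3) = 1, w_n(v3,v1) = 1, w_n(v1,v3) = 1, w_n(v3,v2) = D∞ n, w_n(v2,v1) = 1. Then there is no computable function g : ℕ → Bool such that for every n, the tour selected by g n (the tour v1 → v2 → v3 → v1 if g n = false, and v1 → v3 → v2 → v1 if g n = true) has minimum cost among all directed Hamiltonian tours with respect to w_n. -/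
/-! The weights are chosen so that whichever of the two 3-cycles an optimal solver picks
reveals the output of `f n` whenever `f n` is defined: if `f n = some false` then
`C∞ n = 1 - 2⁻ᵐ < 1 = D∞ n`, so only the cycle through the edge of weight `C∞ n` is optimal,
and symmetrically for `true`. A computable solver would therefore be a total computable
extension of `f`. -/

open Nat.Partrec (Code)
open Nat.Partrec.Code

theorem Nat.find_eq_find_bounded {p : ℕ → Prop} [DecidablePred p] (h : ∃ m, p m) {k : ℕ}
    (hk : Nat.find h ≤ k) :
    ∃ hk' : ∃ m, m ≤ k ∧ p m, Nat.find hk' = Nat.find h := by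
  have hk' : ∃ m, m ≤ k ∧ p m := ⟨Nat.find h, hk, Nat.find_spec h⟩
  exact ⟨hk', le_antisymm (Nat.find_min' hk' ⟨hk, Nat.find_spec h⟩)
    (Nat.find_min' h (Nat.find_spec hk').2)⟩

section Limits

variable {e : Code} {n : ℕ}

theorem evaln_find_isSome_eq_of_eq_some (h : ∃ m, (evaln m e n).isSome) {k x : ℕ}
    (hk : evaln k e n = some x) : evaln (Nat.find h) e n = some x := by
  obtain ⟨y, hy⟩ := Option.isSome_iff_exists.1 (Nat.find_spec h)
  have hy' : y ∈ evaln (max (Nat.find h) k) e n := evaln_mono (le_max_left _ _) hy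
  have hx' : x ∈ evaln (max (Nat.find h) k) e n := evaln_mono (le_max_right _ _) hk
  rw [hy, Option.mem_unique hy' hx']

theorem Cinf_eq (h : ∃ m, (evaln m e n).isSome) :
    Cinf e n = ((if evaln (Nat.find h) e n = some (Encodable.encode false) then
      1 - (2 : ℚ)⁻¹ ^ Nat.find h else 1 : ℚ) : ℝ) := by
  refine Filter.Tendsto.limUnder_eq (tendsto_const_nhds.congr' ?_)
  filter_upwards [Filter.eventually_ge_atTop (Nat.find h)] with k hk
  obtain ⟨hk', hfind⟩ := Nat.find_eq_find_bounded h hk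
  rw [Cq, dif_pos hk', hfind]

theorem Dinf_eq (h : ∃ m, (evaln m e n).isSome) :
    Dinf e n = ((if evaln (Nat.find h) e n = some (Encodable.encode true) then
      1 - (2 : ℚ)⁻¹ ^ Nat.find h else 1 : ℚ) : ℝ) := by
  refine Filter.Tendsto.limUnder_eq (tendsto_const_nhds.congr' ?_)
  filter_upwards [Filter.eventually_ge_atTop (Nat.find h)] with k hk
  obtain ⟨hk', hfind⟩ := Nat.find_eq_find_bounded h hk
  rw [Dq, dif_pos hk', hfind]

end Limits

theorem sum_weights_finRotate_three (c d : ℝ) :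
    ∑ x, ![![1, c, 1], ![1, 1, 1], ![1, d, 1]] x (finRotate 3 x) = c + 2 := by
  rw [Fin.sum_univ_three]
  change c + 1 + 1 = c + 2
  ring

theorem sum_weights_finRotate_three_inv (c d : ℝ) :
    ∑ x, ![![1, c, 1], ![1, 1, 1], ![1, d, 1]] x ((finRotate 3)⁻¹ x) = d + 2 := by
  rw [Fin.sum_univ_three]
  change 1 + 1 + d = d + 2
  ring

theorem no_computable_solver_three_node_tsp_general (f : ℕ →. Bool) (e : Code)
    (he : ∀ (n : ℕ) (b : Bool), b ∈ f n ↔ ∃ k, evaln k e n = some (Encodable.encode b))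
    (hext : ¬ ∃ g : ℕ → Bool, Computable g ∧
      ∀ (n : ℕ) (b : Bool), f n = Part.some b → g n = b)
    (w : ℕ → Fin 3 → Fin 3 → ℝ)
    (hw : ∀ n, w n = ![![1, Cinf e n, 1], ![1, 1, 1], ![1, Dinf e n, 1]]) :
    ¬ ∃ g : ℕ → Bool, Computable g ∧
      ∀ n : ℕ, ∀ σ : Equiv.Perm (Fin 3), (∀ x, σ x ≠ x) →
        (∑ x, w n x ((if g n then (finRotate 3)⁻¹ else finRotate 3) x))
          ≤ ∑ x, w n x (σ x) := by
  rintro ⟨g, hg, hopt⟩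
  refine hext ⟨g, hg, fun n b hb => ?_⟩
  obtain ⟨k, hk⟩ := (he n b).1 (hb ▸ Part.mem_some b)
  have hcycle := hopt n (finRotate 3) (by decide)
  have hcycle_inv := hopt n (finRotate 3)⁻¹ (by decide)
  cases b <;> cases hgn : g n <;>
    simp only [hgn, hw, if_true, Bool.false_eq_true, if_false, sum_weights_finRotate_three,
      sum_weights_finRotate_three_inv] at hcycle hcycle_inv
  · rfl
  · linarith [Cinf_lt_Dinf_of_evaln_eq_false hk]
  · linarith [Dinf_lt_Cinf_of_evaln_eq_true hk]
  · rfl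

/-- Suppose `f` has no total computable extension. Equip, for each `n`, the complete
directed graph on vertices `v1, v2, v3` with weights `w_n(v1,v2) = C∞ n`,
`w_n(v3,v2) = D∞ n`, and all other roads of weight `1`. Then there is no computable
`g : ℕ → Bool` such that for every `n` the tour selected by `g n` (namely
`v1 → v2 → v3 → v1` if `g n = false`, and `v1 → v3 → v2 → v1` if `g n = true`)
has minimum cost among all directed Hamiltonian tours (fixed-point-free
permutations of the vertices). -/
theorem no_computable_solver_three_node_tsp (f : ℕ →. Bool) (hf : Partrec f) (e : Code)
    (he : ∀ (n : ℕ) (b : Bool), b ∈ f n ↔ ∃ k, evaln k e n = some (Encodable.encode b))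
    (hext : ¬ ∃ g : ℕ → Bool, Computable g ∧
      ∀ (n : ℕ) (b : Bool), f n = Part.some b → g n = b)
    (w : ℕ → Fin 3 → Fin 3 → ℝ)
    (hw : ∀ n, w n = ![![1, Cinf e n, 1], ![1, 1, 1], ![1, Dinf e n, 1]]) :
    ¬ ∃ g : ℕ → Bool, Computable g ∧
      ∀ n : ℕ, ∀ σ : Equiv.Perm (Fin 3), (∀ x, σ x ≠ x) →
        (∑ x, w n x ((if g n then (finRotate 3)⁻¹ else finRotate 3) x))
          ≤ ∑ x, w n x (σ x) :=
  no_computable_solver_three_node_tsp_general f e he hext w hw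
end

section
/- Suppose f has no total computable extension. Then there is no computable function g : ℕ → Bool such that for all n, (g n = false → 4 + C∞ n ≤ 4 + D∞ n) and (g n = true → 4 + D∞ n ≤ 4 + C∞ n); that is, no algorithm can uniformly decide which of the two tour costs 4 + C∞ n and 4 + D∞ n in the symmetric five-node instance is minimal. -/
/-!
Once `f` halts on `n` at its least halting step `m`, the sequences `C n ·` and `D n ·` are
constant from `k = m` on: the one belonging to the output is `1 - 2⁻ᵐ`, the other is `1`.
So `C∞ n ≠ D∞ n` whenever `f n` is defined, and the strictly cheaper tour reveals `f n`.
A computable selector `g` would therefore be a total computable extension of `f`.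
-/

open Nat.Partrec (Code)
open Nat.Partrec.Code

open Filter

section

def haltCost (e : Code) (b : Bool) (n k : ℕ) : ℚ :=
  if h : ∃ m, m ≤ k ∧ (evaln m e n).isSome then
    if evaln (Nat.find h) e n = some (Encodable.encode b) then
      1 - (2 : ℚ)⁻¹ ^ (Nat.find h)
    else 1
  else 1

noncomputable def haltCostLim (e : Code) (b : Bool) (n : ℕ) : ℝ :=
  limUnder atTop fun k => (haltCost e b n k : ℝ)

theorem Cinf_eq_haltCostLim (e : Code) (n : ℕ) : Cinf e n = haltCostLim e false n := rfl

theorem Dinf_eq_haltCostLim (e : Code) (n : ℕ) : Dinf e n = haltCostLim e true n := rfl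

variable {e : Code} {n : ℕ}

theorem haltCost_of_find_le (b : Bool) (h0 : ∃ m, (evaln m e n).isSome) {k : ℕ}
    (hk : Nat.find h0 ≤ k) :
    haltCost e b n k = if evaln (Nat.find h0) e n = some (Encodable.encode b) then
      1 - (2 : ℚ)⁻¹ ^ (Nat.find h0) else 1 := by
  have h : ∃ m, m ≤ k ∧ (evaln m e n).isSome := ⟨Nat.find h0, hk, Nat.find_spec h0⟩
  have hfind : Nat.find h = Nat.find h0 :=
    le_antisymm (Nat.find_le ⟨hk, Nat.find_spec h0⟩) (Nat.find_le (Nat.find_spec h).2)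
  rw [haltCost, dif_pos h, hfind]

theorem haltCostLim_eq (b : Bool) (h0 : ∃ m, (evaln m e n).isSome) :
    haltCostLim e b n = if evaln (Nat.find h0) e n = some (Encodable.encode b) then
      1 - (2 : ℝ)⁻¹ ^ (Nat.find h0) else 1 := by
  refine Tendsto.limUnder_eq (tendsto_const_nhds.congr' ?_)
  filter_upwards [eventually_ge_atTop (Nat.find h0)] with k hk
  rw [haltCost_of_find_le b h0 hk]
  split_ifs <;> push_cast <;> rfl

theorem evaln_find_eq_of_evaln_eq {k : ℕ} {x : ℕ} (hk : evaln k e n = some x) :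
    ∃ h0 : ∃ m, (evaln m e n).isSome, evaln (Nat.find h0) e n = some x := by
  have h0 : ∃ m, (evaln m e n).isSome := ⟨k, by rw [hk]; rfl⟩
  refine ⟨h0, ?_⟩
  obtain ⟨y, hy⟩ := Option.isSome_iff_exists.mp (Nat.find_spec h0)
  have hy' : y ∈ evaln (max (Nat.find h0) k) e n := evaln_mono (le_max_left _ _) hy
  have hx : x ∈ evaln (max (Nat.find h0) k) e n := evaln_mono (le_max_right _ _) hk
  rw [hy, Option.mem_unique hy' hx]

theorem haltCostLim_lt_of_evaln_eq {k : ℕ} {c : Bool}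
    (hk : evaln k e n = some (Encodable.encode c)) :
    haltCostLim e c n < haltCostLim e (!c) n := by
  obtain ⟨h0, hfind⟩ := evaln_find_eq_of_evaln_eq hk
  have hne : Encodable.encode c ≠ Encodable.encode (!c) := by
    simp [Encodable.encode_inj]
  rw [haltCostLim_eq c h0, haltCostLim_eq (!c) h0, hfind, if_pos rfl,
    if_neg (by simp [hne])]
  have : (0 : ℝ) < (2 : ℝ)⁻¹ ^ Nat.find h0 := by positivity
  linarith

end

theorem no_computable_cost_selector_symmetric_general (f : ℕ →. Bool) (e : Code)
    (he : ∀ (n : ℕ) (b : Bool), b ∈ f n ↔ ∃ k, evaln k e n = some (Encodable.encode b))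
    (hext : ¬ ∃ g : ℕ → Bool, Computable g ∧
      ∀ (n : ℕ) (b : Bool), f n = Part.some b → g n = b) :
    ¬ ∃ g : ℕ → Bool, Computable g ∧
      ∀ n : ℕ, (g n = false → 4 + Cinf e n ≤ 4 + Dinf e n) ∧
               (g n = true → 4 + Dinf e n ≤ 4 + Cinf e n) := by
  rintro ⟨g, hg, hsel⟩
  refine hext ⟨g, hg, fun n b hb => ?_⟩
  obtain ⟨k, hk⟩ := (he n b).mp (hb ▸ Part.mem_some b)
  have hlt := haltCostLim_lt_of_evaln_eq hk
  simp only [Cinf_eq_haltCostLim, Dinf_eq_haltCostLim] at hsel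
  cases b <;> cases hgn : g n
  · rfl
  · exact absurd ((hsel n).2 hgn) (by simpa using hlt)
  · exact absurd ((hsel n).1 hgn) (by simpa using hlt)
  · rfl

/-- If `f` has no total computable extension, then no computable `g : ℕ → Bool` can
uniformly decide which of the two tour costs `4 + C∞ n` and `4 + D∞ n` in the
symmetric five-node instance is minimal: there is no computable `g` with
`g n = false → 4 + C∞ n ≤ 4 + D∞ n` and `g n = true → 4 + D∞ n ≤ 4 + C∞ n`
for all `n`. -/
theorem no_computable_cost_selector_symmetric (f : ℕ →. Bool) (hf : Partrec f) (e : Code)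
    (he : ∀ (n : ℕ) (b : Bool), b ∈ f n ↔ ∃ k, evaln k e n = some (Encodable.encode b))
    (hext : ¬ ∃ g : ℕ → Bool, Computable g ∧
      ∀ (n : ℕ) (b : Bool), f n = Part.some b → g n = b) :
    ¬ ∃ g : ℕ → Bool, Computable g ∧
      ∀ n : ℕ, (g n = false → 4 + Cinf e n ≤ 4 + Dinf e n) ∧
               (g n = true → 4 + Dinf e n ≤ 4 + Cinf e n) :=
  no_computable_cost_selector_symmetric_general f e he hext
end
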